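/- Entropy facts for System 1 (used in Lemma 6): for System 1 the following hold: (1) I(T̂ ; (Ŝ1, Ŝ2, Ŝ3)) = H(T̂) = 3·Real.log 2; (2) I(x1 ; Ŝ2) = 0 and I(x1 ; Ŝ3) = 0; (3) I(x1 ; Ŝ1) = Real.log 2; (4) H((x1, Ŝ1) | (Ŝ2, Ŝ3)) = 0. -/

import Mathlib

/-!
Put `V = (x1, x2, x4, x5, x7, x8)`; by independence `V` is uniform on `(ZMod 2)⁶`, and every
variable of the system is the image of `V` under a group homomorphism. The image of a uniform
variable under a surjective homomorphism is uniform on the target, so its entropy is the logarithm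
of the target's cardinality. This gives `H(T̂) = 3 log 2`, and, since `(x1, Ŝ2)` and `(x1, Ŝ3)` are
uniform on `(ZMod 2)⁴`, the vanishing of `I(x1 ; Ŝ2)` and `I(x1 ; Ŝ3)`. The other facts only use
that adjoining a function of `Y` to `Y` does not change entropy: `T̂` is a function of
`(Ŝ1, Ŝ2, Ŝ3)`, `x1` of `Ŝ1`, and `(x1, Ŝ1)` of `(Ŝ2, Ŝ3)` via `x1 = x3 - x2`, `x4 = x6 - x5`,
`x7 = x9 - x8`.
-/

open MeasureTheory ProbabilityTheory

/-- Shannon entropy (natural logarithm) of a finite-range random variable `X`,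
computed from the probabilities of its values. -/
noncomputable def entropy {Ω : Type*} [MeasurableSpace Ω] {α : Type*}
    (μ : Measure Ω) (X : Ω → α) : ℝ :=
  ∑' a : α, Real.negMulLog (μ (X ⁻¹' {a})).toReal

/-- Conditional entropy `H(X | Y)`. -/
noncomputable def condEntropy {Ω : Type*} [MeasurableSpace Ω] {α β : Type*}
    (μ : Measure Ω) (X : Ω → α) (Y : Ω → β) : ℝ :=
  entropy μ (fun ω => (X ω, Y ω)) - entropy μ Y

/-- Mutual information `I(X ; Y)`. -/
noncomputable def mutualInfo {Ω : Type*} [MeasurableSpace Ω] {α β : Type*}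
    (μ : Measure Ω) (X : Ω → α) (Y : Ω → β) : ℝ :=
  entropy μ X + entropy μ Y - entropy μ (fun ω => (X ω, Y ω))

open Function
open scoped ENNReal

section FiberCard

variable {G H : Type*} [AddGroup G] [AddGroup H]

lemma AddMonoidHom.natCard_preimage_singleton (f : G →+ H) (g : G) :
    Nat.card (f ⁻¹' {f g}) = Nat.card f.ker :=
  Nat.card_congr ((Equiv.addLeft g).subtypeEquiv fun v => by simp).symm

lemma AddMonoidHom.natCard_ker_mul_natCard {f : G →+ H} (hf : Surjective f) :
    Nat.card f.ker * Nat.card H = Nat.card G := by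
  rw [← f.ker.card_mul_index, AddSubgroup.index_ker, f.range_eq_top.mpr hf, AddSubgroup.card_top]

end FiberCard

section Entropy

variable {Ω : Type*} [MeasurableSpace Ω] {μ : Measure Ω}

lemma entropy_comp_of_injective {α β : Type*} (X : Ω → α) {g : α → β} (hg : Injective g) :
    entropy μ (fun ω => g (X ω)) = entropy μ X := by
  unfold entropy
  refine (hg.tsum_eq fun b hb => ?_).symm.trans ?_
  · by_contra hb'
    have : (fun ω => g (X ω)) ⁻¹' {b} = ∅ :=
      Set.eq_empty_of_forall_notMem fun ω hω => hb' ⟨X ω, hω⟩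
    simp [this] at hb
  · have hfiber : ∀ a, (fun ω => g (X ω)) ⁻¹' {g a} = X ⁻¹' {a} := fun a => by
      ext ω
      simp [hg.eq_iff]
    simp only [hfiber]

lemma entropy_prod_comp_self {α β : Type*} (g : β → α) (Y : Ω → β) :
    entropy μ (fun ω => (g (Y ω), Y ω)) = entropy μ Y :=
  entropy_comp_of_injective Y (g := fun y => (g y, y)) fun _ _ h => congrArg Prod.snd h

lemma mutualInfo_comp_self {α β : Type*} (g : β → α) (Y : Ω → β) :
    mutualInfo μ (fun ω => g (Y ω)) Y = entropy μ (fun ω => g (Y ω)) := by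
  rw [mutualInfo, entropy_prod_comp_self, add_sub_cancel_right]

lemma condEntropy_comp_self {α β : Type*} (g : β → α) (Y : Ω → β) :
    condEntropy μ (fun ω => g (Y ω)) Y = 0 := by
  rw [condEntropy, entropy_prod_comp_self, sub_self]

lemma entropy_eq_log_card_of_uniform {α : Type*} [Finite α] {X : Ω → α}
    (hX : ∀ a, μ (X ⁻¹' {a}) = (Nat.card α : ℝ≥0∞)⁻¹) :
    entropy μ X = Real.log (Nat.card α) := by
  have := Fintype.ofFinite α
  simp only [entropy, tsum_fintype, hX, ENNReal.toReal_inv, ENNReal.toReal_natCast,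
    Real.negMulLog, Real.log_inv, Finset.sum_const, Finset.card_univ, nsmul_eq_mul,
    ← Nat.card_eq_fintype_card]
  rcases eq_or_ne (Nat.card α : ℝ) 0 with h | h
  · rw [h]; simp
  · field_simp

lemma measure_preimage_singleton_pi_of_iIndepFun
    {ι α : Type*} [Fintype ι] [Finite α] [MeasurableSpace α] [MeasurableSingletonClass α]
    {X : ι → Ω → α} (hX : iIndepFun X μ)
    (hunif : ∀ i a, μ (X i ⁻¹' {a}) = (Nat.card α : ℝ≥0∞)⁻¹) (v : ι → α) :
    μ ((fun ω i => X i ω) ⁻¹' {v}) = (Nat.card (ι → α) : ℝ≥0∞)⁻¹ := by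
  have hpre : (fun ω i => X i ω) ⁻¹' {v} = ⋂ i ∈ Finset.univ, X i ⁻¹' {v i} := by
    ext ω
    simp [funext_iff]
  rw [hpre, hX.measure_inter_preimage_eq_mul _ fun i _ => measurableSet_singleton (v i)]
  simp [hunif, Nat.card_fun, ENNReal.inv_pow]

variable {G H : Type*} [AddGroup G] [Finite G] [MeasurableSpace G] [MeasurableSingletonClass G]
  [AddGroup H] {V : Ω → G}

lemma measure_preimage_singleton_comp_addMonoidHom_of_surjective (hVm : Measurable V)
    (hV : ∀ v, μ (V ⁻¹' {v}) = (Nat.card G : ℝ≥0∞)⁻¹) {f : G →+ H} (hf : Surjective f) (h : H) :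
    μ ((fun ω => f (V ω)) ⁻¹' {h}) = (Nat.card H : ℝ≥0∞)⁻¹ := by
  obtain ⟨g, rfl⟩ := hf h
  calc μ (V ⁻¹' (f ⁻¹' {f g}))
      = ∑' v : f ⁻¹' {f g}, μ (V ⁻¹' {v.1}) :=
        (tsum_measure_preimage_singleton (Set.to_countable _)
          fun v _ => hVm (measurableSet_singleton v)).symm
    _ = Nat.card f.ker * (Nat.card f.ker * Nat.card H : ℝ≥0∞)⁻¹ := by
        simp only [hV, ENNReal.tsum_const, ENat.card_eq_coe_natCard, f.natCard_preimage_singleton,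
          ← f.natCard_ker_mul_natCard hf]
        norm_cast
    _ = (Nat.card H : ℝ≥0∞)⁻¹ := by
        have : (Nat.card f.ker : ℝ≥0∞) ≠ 0 := Nat.cast_ne_zero.mpr Nat.card_pos.ne'
        rw [ENNReal.mul_inv (.inl this) (.inl (ENNReal.natCast_ne_top _)), ← mul_assoc,
          ENNReal.mul_inv_cancel this (ENNReal.natCast_ne_top _), one_mul]

lemma entropy_comp_addMonoidHom_of_surjective (hVm : Measurable V)
    (hV : ∀ v, μ (V ⁻¹' {v}) = (Nat.card G : ℝ≥0∞)⁻¹) {f : G →+ H} (hf : Surjective f) :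
    entropy μ (fun ω => f (V ω)) = Real.log (Nat.card H) :=
  have := Finite.of_surjective f hf
  entropy_eq_log_card_of_uniform
    (measure_preimage_singleton_comp_addMonoidHom_of_surjective hVm hV hf)

lemma mutualInfo_comp_addMonoidHom_eq_zero (hVm : Measurable V)
    (hV : ∀ v, μ (V ⁻¹' {v}) = (Nat.card G : ℝ≥0∞)⁻¹)
    {H₁ H₂ : Type*} [AddGroup H₁] [AddGroup H₂] {f₁ : G →+ H₁} {f₂ : G →+ H₂}
    (hf : Surjective (f₁.prod f₂)) :
    mutualInfo μ (fun ω => f₁ (V ω)) (fun ω => f₂ (V ω)) = 0 := by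
  have h₁ : Surjective f₁ := Prod.fst_surjective.comp hf
  have h₂ : Surjective f₂ := Prod.snd_surjective.comp hf
  have := Finite.of_surjective f₁ h₁
  have := Finite.of_surjective f₂ h₂
  have hpair : entropy μ (fun ω => (f₁ (V ω), f₂ (V ω))) = Real.log (Nat.card (H₁ × H₂)) :=
    entropy_comp_addMonoidHom_of_surjective hVm hV hf
  rw [mutualInfo, entropy_comp_addMonoidHom_of_surjective hVm hV h₁,
    entropy_comp_addMonoidHom_of_surjective hVm hV h₂, hpair, Nat.card_prod, Nat.cast_mul,
    Real.log_mul (Nat.cast_ne_zero.mpr Nat.card_pos.ne') (Nat.cast_ne_zero.mpr Nat.card_pos.ne'),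
    sub_self]

end Entropy

theorem system1_entropy_facts_general
    {Ω : Type*} [MeasurableSpace Ω] (μ : Measure Ω)
    (x1 x2 x4 x5 x7 x8 : Ω → ZMod 2)
    (hmeas : ∀ f ∈ [x1, x2, x4, x5, x7, x8], Measurable f)
    (hunif : ∀ f ∈ [x1, x2, x4, x5, x7, x8], ∀ a : ZMod 2, μ (f ⁻¹' {a}) = 1/2)
    (hindep : iIndepFun ![x1, x2, x4, x5, x7, x8] μ)
    (x3 x6 x9 : Ω → ZMod 2)
    (hx3 : x3 = fun ω => x1 ω + x2 ω)
    (hx6 : x6 = fun ω => x4 ω + x5 ω)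
    (hx9 : x9 = fun ω => x7 ω + x8 ω)
    (S1 S2 S3 : Ω → ZMod 2 × ZMod 2 × ZMod 2)
    (hS1 : S1 = fun ω => (x1 ω, x4 ω, x7 ω))
    (hS2 : S2 = fun ω => (x2 ω, x5 ω, x8 ω))
    (hS3 : S3 = fun ω => (x3 ω, x6 ω, x9 ω))
    (T : Ω → ZMod 2 × ZMod 2 × ZMod 2)
    (hT : T = fun ω => (x1 ω, x5 ω, x9 ω)) :
    -- (1) I(T̂ ; (Ŝ1, Ŝ2, Ŝ3)) = H(T̂) = 3 log 2
    mutualInfo μ T (fun ω => (S1 ω, S2 ω, S3 ω)) = entropy μ T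
    ∧ entropy μ T = 3 * Real.log 2
    -- (2) I(x1 ; Ŝ2) = 0 and I(x1 ; Ŝ3) = 0
    ∧ mutualInfo μ x1 S2 = 0
    ∧ mutualInfo μ x1 S3 = 0
    -- (3) I(x1 ; Ŝ1) = log 2
    ∧ mutualInfo μ x1 S1 = Real.log 2
    -- (4) H((x1, Ŝ1) | (Ŝ2, Ŝ3)) = 0
    ∧ condEntropy μ (fun ω => (x1 ω, S1 ω)) (fun ω => (S2 ω, S3 ω)) = 0 := by
  subst hx3 hx6 hx9 hS1 hS2 hS3 hT
  have hmem : ∀ i, ![x1, x2, x4, x5, x7, x8] i ∈ [x1, x2, x4, x5, x7, x8] := fun i => by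
    fin_cases i <;> simp
  let V (ω : Ω) (i : Fin 6) : ZMod 2 := ![x1, x2, x4, x5, x7, x8] i ω
  have hVm : Measurable V := measurable_pi_lambda _ fun i => hmeas _ (hmem i)
  have hV : ∀ v, μ (V ⁻¹' {v}) = (Nat.card (Fin 6 → ZMod 2) : ℝ≥0∞)⁻¹ :=
    measure_preimage_singleton_pi_of_iIndepFun hindep fun i a => by
      rw [hunif _ (hmem i)]
      simp
  let π (i : Fin 6) : (Fin 6 → ZMod 2) →+ ZMod 2 := Pi.evalAddMonoidHom (fun _ => ZMod 2) i
  have hx1 : entropy μ x1 = Real.log 2 :=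
    (entropy_comp_addMonoidHom_of_surjective hVm hV (f := π 0)
      fun a => ⟨Pi.single 0 a, by simp [π]⟩).trans (by simp)
  have hT : entropy μ (fun ω => (x1 ω, x5 ω, x7 ω + x8 ω)) = 3 * Real.log 2 :=
    (entropy_comp_addMonoidHom_of_surjective hVm hV (f := (π 0).prod ((π 3).prod (π 4 + π 5)))
      fun ⟨a, b, c⟩ => ⟨![a, 0, 0, b, c, 0], by simp [π]⟩).trans
      (by norm_num [← Real.log_rpow])
  refine ⟨mutualInfo_comp_self (fun s => (s.1.1, s.2.1.2.1, s.2.2.2.2))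
      fun ω => ((x1 ω, x4 ω, x7 ω), (x2 ω, x5 ω, x8 ω), (x1 ω + x2 ω, x4 ω + x5 ω, x7 ω + x8 ω)),
    hT, ?_, ?_, (mutualInfo_comp_self Prod.fst fun ω => (x1 ω, x4 ω, x7 ω)).trans hx1, ?_⟩
  · exact mutualInfo_comp_addMonoidHom_eq_zero hVm hV (f₁ := π 0)
      (f₂ := (π 1).prod ((π 3).prod (π 5)))
      fun ⟨a, b, c, d⟩ => ⟨![a, b, 0, c, 0, d], by simp [π]⟩
  · exact mutualInfo_comp_addMonoidHom_eq_zero hVm hV (f₁ := π 0)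
      (f₂ := (π 0 + π 1).prod ((π 2 + π 3).prod (π 4 + π 5)))
      fun ⟨a, b, c, d⟩ => ⟨![a, b - a, c, 0, d, 0], by simp [π]⟩
  · convert condEntropy_comp_self (μ := μ)
      (fun s : (ZMod 2 × ZMod 2 × ZMod 2) × (ZMod 2 × ZMod 2 × ZMod 2) =>
        (s.2.1 - s.1.1, s.2.1 - s.1.1, s.2.2.1 - s.1.2.1, s.2.2.2 - s.1.2.2))
      fun ω => ((x2 ω, x5 ω, x8 ω), (x1 ω + x2 ω, x4 ω + x5 ω, x7 ω + x8 ω)) using 2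
    simp

/-- **Entropy facts for System 1 (used in Lemma 6).** `x1, x2, x4, x5, x7, x8`
are independent uniform bits, `x3 = x1 + x2`, `x6 = x4 + x5`, `x9 = x7 + x8`,
the sources are `Ŝ1 = (x1,x4,x7)`, `Ŝ2 = (x2,x5,x8)`, `Ŝ3 = (x3,x6,x9)` and the
target is `T̂ = (x1,x5,x9)`. -/
theorem system1_entropy_facts
    {Ω : Type*} [MeasurableSpace Ω] (μ : Measure Ω) [IsProbabilityMeasure μ]
    (x1 x2 x4 x5 x7 x8 : Ω → ZMod 2)
    (hmeas : ∀ f ∈ [x1, x2, x4, x5, x7, x8], Measurable f)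
    (hunif : ∀ f ∈ [x1, x2, x4, x5, x7, x8], ∀ a : ZMod 2, μ (f ⁻¹' {a}) = 1/2)
    (hindep : iIndepFun ![x1, x2, x4, x5, x7, x8] μ)
    (x3 x6 x9 : Ω → ZMod 2)
    (hx3 : x3 = fun ω => x1 ω + x2 ω)
    (hx6 : x6 = fun ω => x4 ω + x5 ω)
    (hx9 : x9 = fun ω => x7 ω + x8 ω)
    (S1 S2 S3 : Ω → ZMod 2 × ZMod 2 × ZMod 2)
    (hS1 : S1 = fun ω => (x1 ω, x4 ω, x7 ω))
    (hS2 : S2 = fun ω => (x2 ω, x5 ω, x8 ω))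
    (hS3 : S3 = fun ω => (x3 ω, x6 ω, x9 ω))
    (T : Ω → ZMod 2 × ZMod 2 × ZMod 2)
    (hT : T = fun ω => (x1 ω, x5 ω, x9 ω)) :
    -- (1) I(T̂ ; (Ŝ1, Ŝ2, Ŝ3)) = H(T̂) = 3 log 2
    mutualInfo μ T (fun ω => (S1 ω, S2 ω, S3 ω)) = entropy μ T
    ∧ entropy μ T = 3 * Real.log 2
    -- (2) I(x1 ; Ŝ2) = 0 and I(x1 ; Ŝ3) = 0
    ∧ mutualInfo μ x1 S2 = 0
    ∧ mutualInfo μ x1 S3 = 0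
    -- (3) I(x1 ; Ŝ1) = log 2
    ∧ mutualInfo μ x1 S1 = Real.log 2
    -- (4) H((x1, Ŝ1) | (Ŝ2, Ŝ3)) = 0
    ∧ condEntropy μ (fun ω => (x1 ω, S1 ω)) (fun ω => (S2 ω, S3 ω)) = 0 :=
  system1_entropy_facts_general μ x1 x2 x4 x5 x7 x8 hmeas hunif hindep x3 x6 x9 hx3 hx6 hx9 S1 S2 S3
    hS1 hS2 hS3 T hT
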